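/- A conditional convex risk measure satisfying monotonicity and conditional cash-invariance is F_s-regular: for all bounded F_t-measurable ξ₁, ξ₂ and A ∈ F_s, ρ_{s,t}(ξ₁·1_A + ξ₂·1_{A^c}) = ρ_{s,t}(ξ₁)·1_A + ρ_{s,t}(ξ₂)·1_{A^c} a.s. -/
import Mathlib


open MeasureTheory

/-- A conditional risk measure that is monotone and cash-invariant (with respect to
bounded 𝒢s-measurable shifts) is 𝒢s-regular. -/
theorem conditional_risk_measure_regular {Ω : Type*} {m0 : MeasurableSpace Ω}
    (μ : Measure Ω) (𝒢s 𝒢t : MeasurableSpace Ω) (hst : 𝒢s ≤ 𝒢t) (htm : 𝒢t ≤ m0)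
    (ρ : (Ω → ℝ) → (Ω → ℝ))
    (hmono : ∀ ξ₁ ξ₂ : Ω → ℝ, (∀ᵐ ω ∂μ, ξ₂ ω ≤ ξ₁ ω) → ∀ᵐ ω ∂μ, ρ ξ₁ ω ≤ ρ ξ₂ ω)
    (hcash : ∀ (ξ ms : Ω → ℝ), Measurable[𝒢s] ms → (∃ c : ℝ, ∀ ω, |ms ω| ≤ c) →
      ρ (fun ω => ξ ω + ms ω) =ᵐ[μ] fun ω => ρ ξ ω - ms ω) :
    ∀ (ξ₁ ξ₂ : Ω → ℝ), Measurable[𝒢t] ξ₁ → Measurable[𝒢t] ξ₂ →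
      (∃ c : ℝ, ∀ ω, |ξ₁ ω| ≤ c) → (∃ c : ℝ, ∀ ω, |ξ₂ ω| ≤ c) →
      ∀ A : Set Ω, MeasurableSet[𝒢s] A →
      ρ (fun ω => Set.indicator A ξ₁ ω + Set.indicator Aᶜ ξ₂ ω)
        =ᵐ[μ] fun ω => Set.indicator A (ρ ξ₁) ω + Set.indicator Aᶜ (ρ ξ₂) ω := by
  intro ξ₁ ξ₂ hmξ₁ hmξ₂ hb₁ hb₂ A hA
  obtain ⟨c₁, hc₁⟩ := hb₁
  obtain ⟨c₂, hc₂⟩ := hb₂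
  set Z : Ω → ℝ := fun ω => Set.indicator A ξ₁ ω + Set.indicator Aᶜ ξ₂ ω with hZ
  -- key: if Z is within a c-shift supported on a 𝒢s-set B of X, then ρ Z = ρ X a.e. off B
  have key : ∀ (X : Ω → ℝ) (c : ℝ) (B : Set Ω), MeasurableSet[𝒢s] B →
      (∀ ω, Z ω ≤ X ω + Set.indicator B (fun _ => c) ω) →
      (∀ ω, X ω - Set.indicator B (fun _ => c) ω ≤ Z ω) →
      ∀ᵐ ω ∂μ, ω ∉ B → ρ Z ω = ρ X ω := by
    intro X c B hB h1 h2
    set m : Ω → ℝ := Set.indicator B (fun _ => c) with hm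
    have hmeas : Measurable[𝒢s] m := measurable_const.indicator hB
    have hbd : ∀ ω, |m ω| ≤ |c| := by
      intro ω
      by_cases hω : ω ∈ B <;> simp [hm, Set.indicator, hω, abs_nonneg]
    have e1 := hcash X m hmeas ⟨|c|, hbd⟩
    have e2 := hcash X (fun ω => -m ω) hmeas.neg
      ⟨|c|, fun ω => by simpa using hbd ω⟩
    have g1 := hmono (fun ω => X ω + m ω) Z (Filter.Eventually.of_forall h1)
    have g2 := hmono Z (fun ω => X ω + -m ω)
      (Filter.Eventually.of_forall fun ω => by
        have := h2 ω; simp only [sub_eq_add_neg] at this; exact this)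
    filter_upwards [e1, e2, g1, g2] with ω he1 he2 hg1 hg2 hω
    have hmω : m ω = 0 := Set.indicator_of_notMem hω _
    rw [he1] at hg1
    rw [he2] at hg2
    simp only [hmω] at hg1 hg2
    linarith
  have hA1 : ∀ᵐ ω ∂μ, ω ∉ Aᶜ → ρ Z ω = ρ ξ₁ ω := by
    refine key ξ₁ (c₁ + c₂) Aᶜ hA.compl (fun ω => ?_) (fun ω => ?_) <;>
    · by_cases hω : ω ∈ A <;>
      · have h1 := abs_le.mp (hc₁ ω)
        have h2 := abs_le.mp (hc₂ ω)
        simp [hZ, Set.indicator, hω] <;> linarith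
  have hA2 : ∀ᵐ ω ∂μ, ω ∉ A → ρ Z ω = ρ ξ₂ ω := by
    refine key ξ₂ (c₁ + c₂) A hA (fun ω => ?_) (fun ω => ?_) <;>
    · by_cases hω : ω ∈ A <;>
      · have h1 := abs_le.mp (hc₁ ω)
        have h2 := abs_le.mp (hc₂ ω)
        simp [hZ, Set.indicator, hω] <;> linarith
  filter_upwards [hA1, hA2] with ω h1 h2
  by_cases hω : ω ∈ A
  · have := h1 (by simp [hω])
    simp [Set.indicator, hω, this]
  · have := h2 hω
    simp [Set.indicator, hω, this]
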